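/- arXiv:2203.12154 — 2 statements merged into one kernel-verified Lean document; each statement's English description precedes it below -/
import Mathlib

section
/- Let A and B be positive semi-definite n×n real matrices with eigenvalues λ_1(A) ≥ ⋯ ≥ λ_n(A) and λ_1(B) ≥ ⋯ ≥ λ_n(B). Then for all indices i, j with i + j ≤ n + 1, the (i+j−1)-th largest eigenvalue of AB satisfies λ_{i+j−1}(AB) ≤ λ_i(A) · λ_j(B). -/
/-! Write A = S * S with S = √A. Then AB = S(SB) has the characteristic polynomial of the
symmetric matrix SBS, so c lists the eigenvalues of SBS. Since (n - i - j - 1) + i + j < n,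
some x ≠ 0 is orthogonal to the eigenvectors of SBS past index i + j, to the first i
eigenvectors of A, and to the images under S of the first j eigenvectors of B. For it, using
λ_j(B) ≥ 0,
  λ_{i+j}(SBS) ‖x‖² ≤ ⟪SBSx, x⟫ = ⟪B(Sx), Sx⟫ ≤ λ_j(B) ‖Sx‖²
    = λ_j(B) ⟪Ax, x⟫ ≤ λ_j(B) λ_i(A) ‖x‖². -/

open Module RCLike

theorem Antitone.eq_of_multiset_map_univ_eq {α : Type*} [LinearOrder α] {n : ℕ}
    {a a' : Fin n → α} (ha : Antitone a) (ha' : Antitone a')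
    (h : Multiset.map a Finset.univ.val = Multiset.map a' Finset.univ.val) : a = a' := by
  rw [Fin.univ_val_map, Fin.univ_val_map, Multiset.coe_eq_coe] at h
  exact List.ofFn_injective (h.eq_of_sortedGE ha.sortedGE_ofFn ha'.sortedGE_ofFn)

theorem exists_ne_zero_forall_inner_eq_zero {𝕜 E ι : Type*} [RCLike 𝕜] [NormedAddCommGroup E]
    [InnerProductSpace 𝕜 E] [FiniteDimensional 𝕜 E] [Fintype ι] (v : ι → E)
    (h : Fintype.card ι < finrank 𝕜 E) : ∃ x ≠ 0, ∀ i, inner 𝕜 (v i) x = 0 := by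
  set W := Submodule.span 𝕜 (Set.range v)
  have hW : finrank 𝕜 W < finrank 𝕜 E := (finrank_range_le_card v).trans_lt h
  have : Wᗮ ≠ ⊥ := by
    intro hbot
    have := W.finrank_add_finrank_orthogonal
    rw [hbot, finrank_bot] at this
    omega
  obtain ⟨x, hxW, hx0⟩ := Submodule.exists_mem_ne_zero_of_ne_bot this
  exact ⟨x, hx0, fun i => (Submodule.mem_orthogonal W x).mp hxW _ (Submodule.subset_span ⟨i, rfl⟩)⟩

namespace LinearMap.IsSymmetric

section

variable {𝕜 E : Type*} [RCLike 𝕜] [NormedAddCommGroup E] [InnerProductSpace 𝕜 E]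
  [FiniteDimensional 𝕜 E] {T : E →ₗ[𝕜] E} (hT : T.IsSymmetric) {n : ℕ} (hn : finrank 𝕜 E = n)

theorem re_inner_apply_self_eq_sum (x : E) :
    re (inner 𝕜 (T x) x) =
      ∑ l, hT.eigenvalues hn l * ‖inner 𝕜 (hT.eigenvectorBasis hn l) x‖ ^ 2 := by
  set b := hT.eigenvectorBasis hn
  rw [← b.repr.inner_map_map, PiLp.inner_apply, map_sum]
  refine Finset.sum_congr rfl fun l _ => ?_
  rw [hT.eigenvectorBasis_apply_self_apply, b.repr_apply_apply, RCLike.inner_apply',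
    map_mul (starRingEnd 𝕜), conj_ofReal, mul_assoc, RCLike.conj_mul, ← ofReal_pow, ← ofReal_mul,
    ofReal_re]

theorem re_inner_apply_self_le {i : Fin n} {x : E}
    (hx : ∀ l < i, inner 𝕜 (hT.eigenvectorBasis hn l) x = 0) :
    re (inner 𝕜 (T x) x) ≤ hT.eigenvalues hn i * ‖x‖ ^ 2 := by
  rw [hT.re_inner_apply_self_eq_sum hn, ← (hT.eigenvectorBasis hn).sum_sq_norm_inner_right,
    Finset.mul_sum]
  refine Finset.sum_le_sum fun l _ => ?_
  rcases lt_or_ge l i with hl | hl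
  · simp [hx l hl]
  · exact mul_le_mul_of_nonneg_right (hT.eigenvalues_antitone hn hl) (by positivity)

theorem le_re_inner_apply_self {k : Fin n} {x : E}
    (hx : ∀ l, k < l → inner 𝕜 (hT.eigenvectorBasis hn l) x = 0) :
    hT.eigenvalues hn k * ‖x‖ ^ 2 ≤ re (inner 𝕜 (T x) x) := by
  rw [hT.re_inner_apply_self_eq_sum hn, ← (hT.eigenvectorBasis hn).sum_sq_norm_inner_right,
    Finset.mul_sum]
  refine Finset.sum_le_sum fun l _ => ?_
  rcases lt_or_ge k l with hl | hl
  · simp [hx l hl]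
  · exact mul_le_mul_of_nonneg_right (hT.eigenvalues_antitone hn hl) (by positivity)

theorem eigenvalues_add_le_mul {A B M S : E →ₗ[𝕜] E} (hA : A.IsSymmetric) (hB : B.IsSymmetric)
    (hM : M.IsSymmetric) (hS : S.IsSymmetric) (hSA : S ∘ₗ S = A) (hSM : S ∘ₗ B ∘ₗ S = M)
    {i j : Fin n} (hij : (i : ℕ) + j < n) (hb : 0 ≤ hB.eigenvalues hn j) :
    hM.eigenvalues hn ⟨i + j, hij⟩ ≤ hA.eigenvalues hn i * hB.eigenvalues hn j := by
  set k : Fin n := ⟨i + j, hij⟩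
  set u := hA.eigenvectorBasis hn
  set v := hB.eigenvectorBasis hn
  set w := hM.eigenvectorBasis hn
  have hcard : Fintype.card (Finset.Ioi k ⊕ Finset.Iio i ⊕ Finset.Iio j) < finrank 𝕜 E := by
    simp only [Fintype.card_sum, Fintype.card_coe, Fin.card_Ioi, Fin.card_Iio, hn, k]
    omega
  obtain ⟨x, hx0, hx⟩ := exists_ne_zero_forall_inner_eq_zero
    (Sum.elim (fun l : Finset.Ioi k => w l)
      (Sum.elim (fun l : Finset.Iio i => u l) (fun l : Finset.Iio j => S (v l)))) hcard
  have hxM : ∀ l, k < l → inner 𝕜 (w l) x = 0 := fun l hl => hx (.inl ⟨l, Finset.mem_Ioi.mpr hl⟩)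
  have hxA : ∀ l < i, inner 𝕜 (u l) x = 0 := fun l hl =>
    hx (.inr (.inl ⟨l, Finset.mem_Iio.mpr hl⟩))
  have hxB : ∀ l < j, inner 𝕜 (v l) (S x) = 0 := fun l hl => by
    rw [← hS]; exact hx (.inr (.inr ⟨l, Finset.mem_Iio.mpr hl⟩))
  have hSx : ‖S x‖ ^ 2 = re (inner 𝕜 (A x) x) := by
    rw [← hSA, LinearMap.comp_apply, hS, inner_self_eq_norm_sq]
  have hx2 : 0 < ‖x‖ ^ 2 := by positivity
  refine le_of_mul_le_mul_right ?_ hx2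
  calc hM.eigenvalues hn k * ‖x‖ ^ 2 ≤ re (inner 𝕜 (M x) x) := hM.le_re_inner_apply_self hn hxM
    _ = re (inner 𝕜 (B (S x)) (S x)) := by rw [← hSM, LinearMap.comp_apply, hS]; rfl
    _ ≤ hB.eigenvalues hn j * ‖S x‖ ^ 2 := hB.re_inner_apply_self_le hn hxB
    _ ≤ hB.eigenvalues hn j * (hA.eigenvalues hn i * ‖x‖ ^ 2) := by
      rw [hSx]; exact mul_le_mul_of_nonneg_left (hA.re_inner_apply_self_le hn hxA) hb
    _ = hA.eigenvalues hn i * hB.eigenvalues hn j * ‖x‖ ^ 2 := by ring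

end

theorem eq_eigenvalues_of_map_eq_roots_charpoly {E : Type*} [NormedAddCommGroup E]
    [InnerProductSpace ℝ E] [FiniteDimensional ℝ E] {T : E →ₗ[ℝ] E} (hT : T.IsSymmetric) {n : ℕ}
    (hn : finrank ℝ E = n) {a : Fin n → ℝ} (ha : Antitone a)
    (h : Multiset.map a Finset.univ.val = T.charpoly.roots) : a = hT.eigenvalues hn :=
  ha.eq_of_multiset_map_univ_eq (hT.eigenvalues_antitone hn) <| by
    rw [h, hT.roots_charpoly_eq_eigenvalues hn]
    rfl

end LinearMap.IsSymmetric

namespace Matrix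

variable {𝕜 ι : Type*} [RCLike 𝕜] [Fintype ι] [DecidableEq ι]

theorem charpoly_toEuclideanLin (A : Matrix ι ι 𝕜) : (toEuclideanLin A).charpoly = A.charpoly :=
  charpoly_toLin A (PiLp.basisFun 2 𝕜 ι)

open scoped ComplexOrder MatrixOrder in
theorem PosSemidef.exists_posSemidef_mul_self_eq {A : Matrix ι ι 𝕜} (hA : A.PosSemidef) :
    ∃ S : Matrix ι ι 𝕜, S.PosSemidef ∧ S * S = A :=
  ⟨CFC.sqrt A, nonneg_iff_posSemidef.mp (CFC.sqrt_nonneg A), CFC.sqrt_mul_sqrt_self A hA.nonneg⟩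

end Matrix

open Matrix

/-- For A, B positive semi-definite n×n real matrices with
eigenvalues listed in decreasing order `a`, `b` respectively, and `c` the
decreasingly-ordered (real) eigenvalues of AB (the roots of its characteristic
polynomial), for all 0-based indices i, j with i + j ≤ n - 1 (i.e. 1-based
i' + j' ≤ n + 1) we have λ_{i+j}(AB) ≤ λ_i(A) · λ_j(B). -/
theorem stmt_1 {n : ℕ} (A B : Matrix (Fin n) (Fin n) ℝ)
    (hA : A.PosSemidef) (hB : B.PosSemidef)
    (a b c : Fin n → ℝ)
    (ha : Antitone a) (hb : Antitone b) (hc : Antitone c)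
    (hma : Multiset.map a Finset.univ.val = A.charpoly.roots)
    (hmb : Multiset.map b Finset.univ.val = B.charpoly.roots)
    (hmc : Multiset.map c Finset.univ.val = (A * B).charpoly.roots) :
    ∀ i j : Fin n, ∀ h : (i : ℕ) + (j : ℕ) < n,
      c ⟨(i : ℕ) + (j : ℕ), h⟩ ≤ a i * b j := by
  intro i j hij
  obtain ⟨S, hS, rfl⟩ := hA.exists_posSemidef_mul_self_eq
  have hSBS : (S * B * S).IsHermitian := by
    simpa only [hS.1.eq] using (hB.conjTranspose_mul_mul_same S).1
  have hcharpoly : (S * S * B).charpoly = (S * B * S).charpoly := by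
    rw [Matrix.mul_assoc, charpoly_mul_comm]
  have hn := finrank_euclideanSpace_fin (𝕜 := ℝ) (n := n)
  have hB' := isPositive_toEuclideanLin_iff.mpr hB
  obtain rfl := (isSymmetric_toEuclideanLin_iff.mpr hA.1).eq_eigenvalues_of_map_eq_roots_charpoly
    hn ha (by rwa [charpoly_toEuclideanLin])
  obtain rfl := hB'.isSymmetric.eq_eigenvalues_of_map_eq_roots_charpoly hn hb
    (by rwa [charpoly_toEuclideanLin])
  obtain rfl := (isSymmetric_toEuclideanLin_iff.mpr hSBS).eq_eigenvalues_of_map_eq_roots_charpoly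
    hn hc (by rwa [charpoly_toEuclideanLin, ← hcharpoly])
  exact LinearMap.IsSymmetric.eigenvalues_add_le_mul _ _ _ _
    (isSymmetric_toEuclideanLin_iff.mpr hS.1) (by simp) (by simp [Matrix.mul_assoc]) hij
    (hB'.nonneg_eigenvalues hn j)
end

section
/- Let A be a p×p real matrix and Φ a symmetric positive semi-definite p×p matrix with λ_max(Φ) ≤ C. Then for every even positive integer q, tr((Φ^{1/2} A Φ Aᵀ Φ^{1/2})^{q/2}) ≤ C^q · tr((A Aᵀ)^{q/2}). -/
/-! Since all eigenvalues of `Φ` are at most `C`, `Φ ≤ C • 1` in the Loewner order, hence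
`B Φ Bᴴ ≤ C • B Bᴴ` for every `B`. The map `X ↦ tr (X ^ m)` is monotone on positive semidefinite
matrices: along `A + t (B - A)` its derivative is `m tr ((A + t (B - A)) ^ (m - 1) (B - A)) ≥ 0`.
Applying this to `B = Φ^{1/2} A` gives the factor `C ^ m`; the identity `tr ((P Q) ^ m) = tr ((Q P) ^ m)`
turns `Φ^{1/2} A Aᵀ Φ^{1/2}` into `Aᵀ Φ A`, and a second application with `B = Aᵀ` gives the
other factor `C ^ m`. -/

open Matrix

open scoped ComplexOrder in
/-- The positive semidefinite square root of a positive semidefinite matrix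
(as defined in Mathlib of December 2024, since removed). -/
noncomputable def Matrix.PosSemidef.sqrt {n 𝕜 : Type*} [Fintype n] [RCLike 𝕜] [DecidableEq n]
    {A : Matrix n n 𝕜} (hA : A.PosSemidef) : Matrix n n 𝕜 :=
  hA.1.eigenvectorUnitary.1 * diagonal ((↑) ∘ Real.sqrt ∘ hA.1.eigenvalues) *
    (star hA.1.eigenvectorUnitary : Matrix n n 𝕜)

open scoped ComplexOrder MatrixOrder

namespace Matrix

variable {n 𝕜 : Type*} [Fintype n] [DecidableEq n] [RCLike 𝕜]

lemma PosSemidef.sqrt_eq_cfcSqrt {A : Matrix n n 𝕜} (hA : A.PosSemidef) :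
    hA.sqrt = CFC.sqrt A := by
  rw [CFC.sqrt_eq_real_sqrt A hA.nonneg, cfcₙ_eq_cfc, hA.1.cfc_eq]
  rfl

lemma IsHermitian.le_smul_one_of_eigenvalues_le {A : Matrix n n 𝕜}
    (hA : A.IsHermitian) {c : ℝ} (h : ∀ i, hA.eigenvalues i ≤ c) : A ≤ c • 1 := by
  rw [← Algebra.algebraMap_eq_smul_one]
  refine le_algebraMap_of_spectrum_le (fun x hx => ?_) hA.isSelfAdjoint
  obtain ⟨i, rfl⟩ := hA.spectrum_real_eq_range_eigenvalues ▸ hx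
  exact h i

lemma PosSemidef.trace_mul_nonneg {A B : Matrix n n 𝕜} (hA : A.PosSemidef) (hB : B.PosSemidef) :
    0 ≤ (A * B).trace := by
  obtain ⟨R, rfl⟩ := CStarAlgebra.nonneg_iff_eq_star_mul_self.mp hB.nonneg
  rw [← mul_assoc, trace_mul_comm, ← mul_assoc, star_eq_conjTranspose]
  exact (hA.mul_mul_conjTranspose_same R).trace_nonneg

lemma mul_mul_conjTranspose_le_smul {A B : Matrix n n 𝕜} {c : ℝ} (h : A ≤ c • 1) :
    B * A * Bᴴ ≤ c • (B * Bᴴ) := by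
  simpa [← star_eq_conjTranspose] using star_left_conjugate_le_conjugate h (star B)

lemma trace_pow_mul_comm {R : Type*} [CommSemiring R] (A B : Matrix n n R) (k : ℕ) :
    ((A * B) ^ k).trace = ((B * A) ^ k).trace := by
  cases k with
  | zero => rfl
  | succ k => rw [pow_succ, ← mul_assoc, mul_pow_mul, trace_mul_comm, ← mul_assoc, ← pow_succ']

section Calculus

attribute [local instance] Matrix.linftyOpNormedRing Matrix.linftyOpNormedAlgebra

lemma hasDerivAt_trace_pow_add_smul (A D : Matrix n n ℝ) (k : ℕ) (t : ℝ) :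
    HasDerivAt (fun s : ℝ => ((A + s • D) ^ k).trace)
      (k * ((A + t • D) ^ (k - 1) * D).trace) t := by
  have hline : HasDerivAt (fun s : ℝ => A + s • D) D t :=
    (((hasDerivAt_id t).smul_const D).const_add A).congr_deriv (one_smul ℝ D)
  refine (((traceLinearMap n ℝ ℝ).toContinuousLinearMap.hasFDerivAt).comp_hasDerivAt t
    (hline.fun_pow' k)).congr_deriv ?_
  set F := A + t • D
  have hterm (i : ℕ) (hi : i ∈ Finset.range k) :
      (F ^ (k.pred - i) * D * F ^ i).trace = (F ^ (k - 1) * D).trace := by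
    rw [trace_mul_comm, ← mul_assoc, ← pow_add, Nat.pred_eq_sub_one,
      Nat.add_sub_of_le (by grind)]
  change (∑ i ∈ Finset.range k, F ^ (k.pred - i) * D * F ^ i).trace = _
  rw [trace_sum, Finset.sum_congr rfl hterm, Finset.sum_const, Finset.card_range, nsmul_eq_mul]

end Calculus

lemma trace_pow_le_trace_pow_of_le {A B : Matrix n n ℝ} (hA : 0 ≤ A) (hAB : A ≤ B) (k : ℕ) :
    (A ^ k).trace ≤ (B ^ k).trace := by
  set D := B - A
  have hD : D.PosSemidef := hAB
  have hderiv (t : ℝ) := hasDerivAt_trace_pow_add_smul A D k t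
  have hmono : MonotoneOn (fun s : ℝ => ((A + s • D) ^ k).trace) (Set.Icc 0 1) := by
    refine monotoneOn_of_hasDerivWithinAt_nonneg (convex_Icc 0 1)
      (fun t _ => (hderiv t).continuousAt.continuousWithinAt)
      (fun t _ => (hderiv t).hasDerivWithinAt) fun t ht => ?_
    rw [interior_Icc] at ht
    have hF : (A + t • D).PosSemidef := hA.posSemidef.add (hD.smul ht.1.le)
    exact mul_nonneg k.cast_nonneg ((hF.pow (k - 1)).trace_mul_nonneg hD)
  simpa [D] using hmono (Set.left_mem_Icc.2 zero_le_one) (Set.right_mem_Icc.2 zero_le_one)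
    zero_le_one

lemma trace_pow_mul_mul_conjTranspose_le {A B : Matrix n n ℝ} {c : ℝ} (hA : 0 ≤ A)
    (hAc : A ≤ c • 1) (k : ℕ) : ((B * A * Bᴴ) ^ k).trace ≤ c ^ k * ((B * Bᴴ) ^ k).trace := by
  calc ((B * A * Bᴴ) ^ k).trace
      ≤ ((c • (B * Bᴴ)) ^ k).trace := trace_pow_le_trace_pow_of_le
        (by simpa [star_eq_conjTranspose] using star_left_conjugate_nonneg hA Bᴴ)
        (mul_mul_conjTranspose_le_smul hAc) k
    _ = c ^ k * ((B * Bᴴ) ^ k).trace := by rw [smul_pow, trace_smul, smul_eq_mul]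

end Matrix

/-- For A a p×p real matrix and Φ symmetric PSD with
λ_max(Φ) ≤ C, for every even positive integer q = 2m,
tr((Φ^{1/2} A Φ Aᵀ Φ^{1/2})^{q/2}) ≤ C^q · tr((A Aᵀ)^{q/2}). -/
theorem stmt_2 {p : ℕ} (A Φ : Matrix (Fin p) (Fin p) ℝ)
    (hΦ : Φ.PosSemidef) (C : ℝ) (hC : 0 < C)
    (hmax : ∀ i, hΦ.1.eigenvalues i ≤ C) :
    ∀ m : ℕ, 0 < m →
      ((hΦ.sqrt * A * Φ * Aᵀ * hΦ.sqrt) ^ m).trace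
        ≤ C ^ (2 * m) * ((A * Aᵀ) ^ m).trace := by
  intro m _
  have hΦC : Φ ≤ C • 1 := hΦ.1.le_smul_one_of_eigenvalues_le hmax
  rw [hΦ.sqrt_eq_cfcSqrt, ← conjTranspose_eq_transpose_of_trivial]
  set S := CFC.sqrt Φ
  have hS : Sᴴ = S := (CFC.sqrt_nonneg Φ).posSemidef.1
  have hSS : S * S = Φ := CFC.sqrt_mul_sqrt_self Φ
  calc ((S * A * Φ * Aᴴ * S) ^ m).trace
      = (((S * A) * Φ * (S * A)ᴴ) ^ m).trace := by
        simp only [conjTranspose_mul, hS, mul_assoc]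
    _ ≤ C ^ m * (((S * A) * (S * A)ᴴ) ^ m).trace :=
        trace_pow_mul_mul_conjTranspose_le hΦ.nonneg hΦC m
    _ = C ^ m * ((Aᴴ * Φ * Aᴴᴴ) ^ m).trace := by
        rw [trace_pow_mul_comm, conjTranspose_mul, hS, conjTranspose_conjTranspose, ← hSS]
        simp only [mul_assoc]
    _ ≤ C ^ m * (C ^ m * ((Aᴴ * Aᴴᴴ) ^ m).trace) := mul_le_mul_of_nonneg_left
        (trace_pow_mul_mul_conjTranspose_le hΦ.nonneg hΦC m) (pow_nonneg hC.le m)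
    _ = C ^ (2 * m) * ((A * Aᴴ) ^ m).trace := by
        rw [trace_pow_mul_comm, conjTranspose_conjTranspose, ← mul_assoc, ← pow_add, two_mul]
end
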